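/- In case m = 1 with Grassmann variables θ₁,…,θ_{2n} and θ² := Σ_{j,k} θⱼ J_{jk} θₖ, with the Berezin integral normalized so that ∫_{B_{2n}} θ^{2n} = n!, the Berezin integral of (1 − θ²)^{-1/2} equals Γ(1/2 + n)/Γ(1/2), i.e. ∫_{B_{2n}} (1 − θ²)^{-1/2} = Γ(1/2+n)/Γ(1/2); in particular ∫_{B_{2n}} (1 − θ²)^{-1/2} ≠ 0. -/

import Mathlib

noncomputable section

open Matrix

/-- The standard symplectic matrix `J = [[0, Iₙ],[-Iₙ, 0]]` over `ℝ`. -/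
def sympJR (n : ℕ) : Matrix (Fin n ⊕ Fin n) (Fin n ⊕ Fin n) ℝ :=
  Matrix.fromBlocks 0 1 (-1) 0

/-- The binomial coefficient `binom(-1/2, k)`, the `k`-th Taylor coefficient of
`(1+x)^{-1/2}`. -/
def invSqrtCoeff (k : ℕ) : ℝ :=
  (∏ i ∈ Finset.range k, (-(1 : ℝ) / 2 - (i : ℝ))) / (Nat.factorial k)

lemma gamma_ratio (n : ℕ) :
    Real.Gamma (1 / 2 + n) / Real.Gamma (1 / 2)
      = ∏ i ∈ Finset.range n, ((1 : ℝ) / 2 + i) := by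
  induction n with
  | zero =>
    simp only [Nat.cast_zero, add_zero, Finset.range_zero, Finset.prod_empty]
    exact div_self (Real.Gamma_pos_of_pos (by norm_num : (0:ℝ) < 1/2)).ne'
  | succ n ih =>
    rw [Finset.prod_range_succ, ← ih]
    push_cast
    rw [show (1:ℝ)/2 + (n + 1) = (1/2 + n) + 1 by ring,
      Real.Gamma_add_one (by positivity)]
    field_simp

lemma key_invSqrt (n : ℕ) : (-1 : ℝ) ^ n * invSqrtCoeff n * (Nat.factorial n)
    = Real.Gamma (1 / 2 + n) / Real.Gamma (1 / 2) := by
  have hp : ∏ i ∈ Finset.range n, ((1 : ℝ) / 2 + i)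
      = (-1 : ℝ) ^ n * ∏ i ∈ Finset.range n, (-(1 : ℝ) / 2 - (i : ℝ)) := by
    rw [show ((-1:ℝ))^n = ∏ _i ∈ Finset.range n, (-1:ℝ) by simp,
      ← Finset.prod_mul_distrib]
    exact Finset.prod_congr rfl fun i _ => by ring
  have hf : (Nat.factorial n : ℝ) ≠ 0 := Nat.cast_ne_zero.mpr n.factorial_ne_zero
  rw [gamma_ratio, hp, invSqrtCoeff]
  field_simp

/-- in case `m = 1`, with Grassmann variables `θ₁, …, θ_{2n}`,
`θ² := Σ_{j,k} θⱼ J_{jk} θₖ`, and the Berezin integral `∫_{B_{2n}}`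
(a linear functional normalized so that `∫ (θ²)ⁿ = n!`, and vanishing on
`(θ²)ᵏ` for `k < n`), the Berezin integral of the terminating series
`(1 − θ²)^{-1/2} = Σ_{k≤n} binom(-1/2,k) (−θ²)ᵏ` equals
`Γ(1/2 + n)/Γ(1/2)`; in particular it is nonzero. -/
theorem berezin_integral_osp_1_2n (n : ℕ) (Λ : Type*) [Ring Λ] [Algebra ℝ Λ]
    (θ : (Fin n ⊕ Fin n) → Λ)
    (hodd : ∀ j k, θ j * θ k = -(θ k * θ j))
    (Bint : Λ →ₗ[ℝ] ℝ) :
    ∀ θsq : Λ, θsq = ∑ j, ∑ k, sympJR n j k • (θ j * θ k) →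
      Bint (θsq ^ n) = Nat.factorial n →
      (∀ k, k < n → Bint (θsq ^ k) = 0) →
      Bint (∑ k ∈ Finset.range (n + 1), ((-1 : ℝ) ^ k * invSqrtCoeff k) • θsq ^ k)
          = Real.Gamma (1 / 2 + n) / Real.Gamma (1 / 2)
      ∧ Bint (∑ k ∈ Finset.range (n + 1), ((-1 : ℝ) ^ k * invSqrtCoeff k) • θsq ^ k)
          ≠ 0 := by
  intro θsq _ hn hlt
  have hval : Bint (∑ k ∈ Finset.range (n + 1),
      ((-1 : ℝ) ^ k * invSqrtCoeff k) • θsq ^ k)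
      = Real.Gamma (1 / 2 + n) / Real.Gamma (1 / 2) := by
    rw [map_sum, Finset.sum_range_succ]
    have h0 : ∀ k ∈ Finset.range n,
        Bint (((-1 : ℝ) ^ k * invSqrtCoeff k) • θsq ^ k) = 0 := by
      intro k hk
      rw [_root_.map_smul, hlt k (Finset.mem_range.mp hk), smul_zero]
    rw [Finset.sum_eq_zero h0, zero_add, _root_.map_smul, hn, smul_eq_mul,
      ← key_invSqrt n]
  refine ⟨hval, ?_⟩
  rw [hval]
  have h1 : 0 < Real.Gamma (1 / 2 + n) :=
    Real.Gamma_pos_of_pos (by positivity)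
  have h2 : 0 < Real.Gamma (1 / 2) :=
    Real.Gamma_pos_of_pos (by norm_num)
  positivity
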